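/- Error bound for a square-root measurement element: Let {P_k}_{k∈M} be a finite family of complex square matrices over a fixed finite index type with 0 ≤ P_k ≤ I for each k, and suppose S = Σ_k P_k is positive definite. Fix m ∈ M, set Λ_m = S^{−1/2} P_m S^{−1/2}, and let ρ be a density matrix. Then Tr[(I − Λ_m) ρ] ≤ 2 Tr[(I − P_m) ρ] + 4 Σ_{k ≠ m} Tr[P_k ρ]. -/

import Mathlib

/-!
The bound is the Hayashi–Nagaoka operator inequality `1 - S^{-1/2} T S^{-1/2} ≤ 2 (1 - T) + 4 T'`
for `0 ≤ T ≤ 1`, `0 ≤ T'` and `S = T + T'` invertible, tested against the positive functional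
`X ↦ Tr[X ρ]`. Writing `R = √S` and `L = R⁻¹`, one has `1 - L T L = L T' L`, and the gap
`2 (1 - T) + 4 T' - L T' L` equals `(L - 2) T' (L - 2) + 2 (L - 1) T (L - 1) + 4 (R - T)`.
The first two terms are conjugates of positive elements; the last is positive because the square
root is operator monotone and `T² ≤ T ≤ S`, so `T = √(T²) ≤ √S = R`.
-/

open scoped Matrix ComplexOrder

/-- The square root of a positive semidefinite matrix, as defined in the older Mathlib
(`Matrix.PosSemidef.sqrt`, since removed). -/
noncomputable def Matrix.PosSemidef.sqrt {n 𝕜 : Type*} [Fintype n] [DecidableEq n] [RCLike 𝕜]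
    {A : Matrix n n 𝕜} (hA : A.PosSemidef) : Matrix n n 𝕜 :=
  hA.1.eigenvectorUnitary.1 * Matrix.diagonal ((↑) ∘ (√·) ∘ hA.1.eigenvalues) *
    (star hA.1.eigenvectorUnitary : Matrix n n 𝕜)

open scoped MatrixOrder Matrix.Norms.L2Operator Ring

theorem hayashi_nagaoka_identity {R : Type*} [Ring R] {a b l r : R}
    (hlr : l * r = 1) (hrl : r * l = 1) (hr : r * r = a + b) :
    2 * (1 - a) + 4 * b - (1 - l * a * l) =
      (l - 2) * b * (l - 2) + 2 • ((l - 1) * a * (l - 1)) + 4 • (r - a) := by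
  have hl : l * (a + b) = r := by rw [← hr, ← mul_assoc, hlr, one_mul]
  have hr' : (a + b) * l = r := by rw [← hr, mul_assoc, hrl, mul_one]
  have hlrl : l * (a + b) * l = 1 := by rw [hl, hrl]
  linear_combination (norm := noncomm_ring) -hlrl + 2 * hl + 2 * hr'

namespace CFC

variable {A : Type*} [CStarAlgebra A] [PartialOrder A] [StarOrderedRing A]

theorem mul_self_le_self {a : A} (h₀ : 0 ≤ a) (h₁ : a ≤ 1) : a * a ≤ a := by
  have h : sqrt a * (1 - sqrt a * sqrt a) * sqrt a =
      sqrt a * sqrt a - sqrt a * sqrt a * (sqrt a * sqrt a) := by noncomm_ring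
  rw [sqrt_mul_sqrt_self a] at h
  rw [← sub_nonneg, ← h]
  exact (sqrt_nonneg a).isSelfAdjoint.conjugate_nonneg (sub_nonneg.2 h₁)

theorem le_sqrt_add {a b : A} (ha₀ : 0 ≤ a) (ha₁ : a ≤ 1) (hb : 0 ≤ b) : a ≤ sqrt (a + b) :=
  calc a = sqrt (a * a) := (sqrt_mul_self a).symm
    _ ≤ sqrt (a + b) :=
      sqrt_le_sqrt _ _ ((mul_self_le_self ha₀ ha₁).trans (le_add_of_nonneg_right hb))

theorem one_sub_inverse_sqrt_conj_le {a b : A} (ha₀ : 0 ≤ a) (ha₁ : a ≤ 1) (hb : 0 ≤ b)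
    (hab : IsUnit (a + b)) :
    1 - (sqrt (a + b))⁻¹ʳ * a * (sqrt (a + b))⁻¹ʳ ≤ 2 * (1 - a) + 4 * b := by
  have hr : IsUnit (sqrt (a + b)) := (isUnit_sqrt_iff _ (add_nonneg ha₀ hb)).2 hab
  have hl : IsSelfAdjoint (sqrt (a + b))⁻¹ʳ := (sqrt_nonneg _).isSelfAdjoint.ringInverse
  rw [← sub_nonneg, hayashi_nagaoka_identity (Ring.inverse_mul_cancel _ hr)
    (Ring.mul_inverse_cancel _ hr) (sqrt_mul_sqrt_self _ (add_nonneg ha₀ hb))]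
  refine add_nonneg (add_nonneg ?_ (nsmul_nonneg ?_ 2)) (nsmul_nonneg ?_ 4)
  · exact (hl.sub (.ofNat 2)).conjugate_nonneg hb
  · exact (hl.sub (.one A)).conjugate_nonneg ha₀
  · exact sub_nonneg.2 (le_sqrt_add ha₀ ha₁ hb)

end CFC

namespace Matrix

variable {n 𝕜 : Type*} [Fintype n] [RCLike 𝕜]

theorem PosSemidef.sqrt_eq_cfcSqrt [DecidableEq n] {A : Matrix n n 𝕜} (hA : A.PosSemidef) :
    hA.sqrt = CFC.sqrt A := by
  rw [CFC.sqrt_eq_real_sqrt A hA.nonneg, cfcₙ_eq_cfc, hA.1.cfc_eq, IsHermitian.cfc,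
    Unitary.conjStarAlgAut_apply]
  rfl

theorem trace_mul_nonneg {A ρ : Matrix n n 𝕜} (hA : 0 ≤ A) (hρ : 0 ≤ ρ) :
    0 ≤ (A * ρ).trace := by
  classical
  obtain ⟨C, rfl⟩ := CStarAlgebra.nonneg_iff_eq_star_mul_self.mp hρ
  rw [← mul_assoc, trace_mul_comm, ← mul_assoc]
  exact (nonneg_iff_posSemidef.1 (star_right_conjugate_nonneg hA C)).trace_nonneg

theorem trace_mul_le_trace_mul {A B ρ : Matrix n n 𝕜} (hAB : A ≤ B) (hρ : 0 ≤ ρ) :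
    (A * ρ).trace ≤ (B * ρ).trace := by
  rw [← sub_nonneg, ← trace_sub, ← sub_mul]
  exact trace_mul_nonneg (sub_nonneg.2 hAB) hρ

end Matrix

theorem srm_error_bound_general {M d : Type*} [Fintype M] [DecidableEq M] [Fintype d] [DecidableEq d]
    (P : M → Matrix d d ℂ)
    (hP : ∀ k, (P k).PosSemidef ∧ ((1 : Matrix d d ℂ) - P k).PosSemidef)
    (hS : (∑ k, P k).PosDef)
    (m : M) (ρ : Matrix d d ℂ) (hρ : ρ.PosSemidef) :
    ((((1 : Matrix d d ℂ) -
        (hS.posSemidef.sqrt)⁻¹ * P m * (hS.posSemidef.sqrt)⁻¹) * ρ).trace).re ≤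
      2 * ((((1 : Matrix d d ℂ) - P m) * ρ).trace).re +
        4 * ∑ k ∈ Finset.univ.erase m, ((P k * ρ).trace).re := by
  have hsplit : ∑ k, P k = P m + ∑ k ∈ Finset.univ.erase m, P k :=
    (Finset.add_sum_erase _ _ (Finset.mem_univ m)).symm
  have hop := CFC.one_sub_inverse_sqrt_conj_le (hP m).1.nonneg (Matrix.le_iff.2 (hP m).2)
    (Finset.sum_nonneg fun k _ => (hP k).1.nonneg) (by rw [← hsplit]; exact hS.isUnit)
  rw [← hsplit, ← hS.posSemidef.sqrt_eq_cfcSqrt, ← Matrix.nonsing_inv_eq_ringInverse] at hop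
  refine (Complex.le_def.1 (Matrix.trace_mul_le_trace_mul hop hρ.nonneg)).1.trans_eq ?_
  rw [← Matrix.diagonal_ofNat, ← Matrix.diagonal_ofNat, ← Matrix.smul_eq_diagonal_mul,
    ← Matrix.smul_eq_diagonal_mul]
  simp only [add_mul, smul_mul_assoc, Finset.sum_mul, Matrix.trace_add, Matrix.trace_smul,
    Matrix.trace_sum, smul_eq_mul, Complex.add_re]
  simp [Complex.re_sum]

/-- Error bound for a square-root measurement element: with `0 ≤ P_k ≤ I`,
`S = Σ_k P_k` positive definite, `Λ_m = S^{−1/2} P_m S^{−1/2}` and `ρ` a density matrix,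
`Tr[(I − Λ_m) ρ] ≤ 2 Tr[(I − P_m) ρ] + 4 Σ_{k ≠ m} Tr[P_k ρ]`. -/
theorem srm_error_bound {M d : Type*} [Fintype M] [DecidableEq M] [Fintype d] [DecidableEq d]
    (P : M → Matrix d d ℂ)
    (hP : ∀ k, (P k).PosSemidef ∧ ((1 : Matrix d d ℂ) - P k).PosSemidef)
    (hS : (∑ k, P k).PosDef)
    (m : M) (ρ : Matrix d d ℂ) (hρ : ρ.PosSemidef) (hρ1 : ρ.trace = 1) :
    ((((1 : Matrix d d ℂ) -
        (hS.posSemidef.sqrt)⁻¹ * P m * (hS.posSemidef.sqrt)⁻¹) * ρ).trace).re ≤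
      2 * ((((1 : Matrix d d ℂ) - P m) * ρ).trace).re +
        4 * ∑ k ∈ Finset.univ.erase m, ((P k * ρ).trace).re :=
  srm_error_bound_general P hP hS m ρ hρ
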